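/- arXiv:2208.00194 — 5 statements merged into one kernel-verified Lean document; each statement's English description precedes it below -/
import Mathlib

section
/- Let X be a finite metric space with |X| ≥ k ≥ 2 and let ε ∈ (0,1). Suppose that for every μ in the grid U there is a set S_μ ⊆ X that is a greedy candidate on Y = X with threshold μ and capacity k (i.e., S_μ is μ-separated, |S_μ| ≤ k, and if |S_μ| < k then every x ∈ X satisfies d(x, S_μ) < μ). Then there exists μ ∈ U with |S_μ| = k and div(S_μ) ≥ ((1−ε)/2) · OPT, where OPT is the maximum of div(T) over all k-element subsets T of X. (This is the (1−ε)/2 approximation guarantee of the streaming algorithm for unconstrained max–min diversity maximization, Theorem 1.) -/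
open Finset

variable {α : Type*} [MetricSpace α] [DecidableEq α]

/-- A finite set `S` is `μ`-separated if `d(x,y) ≥ μ` for all distinct `x, y ∈ S`. -/
def Separated (μ : ℝ) (S : Finset α) : Prop :=
  ∀ x ∈ S, ∀ y ∈ S, x ≠ y → μ ≤ dist x y

/-- Max–min diversity of a finite set: the minimum pairwise distance over distinct pairs. -/
noncomputable def divers (S : Finset α) : ℝ :=
  sInf {r : ℝ | ∃ x ∈ S, ∃ y ∈ S, x ≠ y ∧ dist x y = r}

/-- Distance from a point to a (nonempty) finite set: `d(y,S) = min_{s ∈ S} d(y,s)`. -/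
noncomputable def setDist (y : α) (S : Finset α) : ℝ :=
  sInf {r : ℝ | ∃ s ∈ S, dist y s = r}

/-- Minimum pairwise distance over distinct pairs of `X`. -/
noncomputable def dMin (X : Finset α) : ℝ :=
  sInf {r : ℝ | ∃ x ∈ X, ∃ y ∈ X, x ≠ y ∧ dist x y = r}

/-- Maximum pairwise distance over distinct pairs of `X`. -/
noncomputable def dMax (X : Finset α) : ℝ :=
  sSup {r : ℝ | ∃ x ∈ X, ∃ y ∈ X, x ≠ y ∧ dist x y = r}

/-- The geometric grid of guesses `U = { d_min/(1-ε)^j : j ∈ ℕ } ∩ [d_min, d_max]`. -/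
def grid (X : Finset α) (ε : ℝ) : Set ℝ :=
  {μ | (∃ j : ℕ, μ = dMin X / (1 - ε) ^ j) ∧ dMin X ≤ μ ∧ μ ≤ dMax X}

/-- A greedy candidate on ground set `Y` with threshold `μ` and capacity `c`:
`S ⊆ Y`, `S` is `μ`-separated, `|S| ≤ c`, and if `|S| < c` then every `y ∈ Y`
satisfies `d(y,S) < μ` (i.e., has some element of `S` within distance `< μ`). -/
def GreedyCandidate (μ : ℝ) (c : ℕ) (Y S : Finset α) : Prop :=
  S ⊆ Y ∧ Separated μ S ∧ S.card ≤ c ∧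
    (S.card < c → ∀ y ∈ Y, ∃ s ∈ S, dist y s < μ)

/-- `OPT`: the maximum of `div(T)` over all `k`-element subsets `T ⊆ X`. -/
noncomputable def OPTk (X : Finset α) (k : ℕ) : ℝ :=
  sSup {r : ℝ | ∃ T ⊆ X, T.card = k ∧ divers T = r}

/-- `OPT_f`: the maximum of `div(S)` over all fair subsets `S ⊆ X`
(those with `|S ∩ X_i| = k_i` for every group `i`). -/
noncomputable def OPTf (X : Finset α) {m : ℕ} (Xg : Fin m → Finset α) (kg : Fin m → ℕ) : ℝ :=
  sSup {r : ℝ | ∃ S ⊆ X, (∀ i, (S ∩ Xg i).card = kg i) ∧ divers S = r}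

/-- The chain relation on `P` with threshold `τ`: the reflexive–transitive closure of
"both points are in `P` and their distance is `< τ`". -/
def ChainRel (P : Finset α) (τ : ℝ) : α → α → Prop :=
  Relation.ReflTransGen (fun x y => x ∈ P ∧ y ∈ P ∧ dist x y < τ)


lemma pairSet_finite (S : Finset α) :
    {r : ℝ | ∃ x ∈ S, ∃ y ∈ S, x ≠ y ∧ dist x y = r}.Finite := by
  apply Set.Finite.subset (((S ×ˢ S).finite_toSet).image fun p => dist p.1 p.2)
  rintro r ⟨x, hx, y, hy, _, rfl⟩
  exact ⟨(x, y), by simp [hx, hy], rfl⟩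

lemma pairSet_nonempty {S : Finset α} (h : 1 < S.card) :
    {r : ℝ | ∃ x ∈ S, ∃ y ∈ S, x ≠ y ∧ dist x y = r}.Nonempty := by
  obtain ⟨a, ha, b, hb, hab⟩ := Finset.one_lt_card.mp h
  exact ⟨dist a b, a, ha, b, hb, hab, rfl⟩

lemma divers_le_dist {S : Finset α} {x y : α} (hx : x ∈ S) (hy : y ∈ S) (hxy : x ≠ y) :
    divers S ≤ dist x y :=
  csInf_le (pairSet_finite S).bddBelow ⟨x, hx, y, hy, hxy, rfl⟩

lemma le_divers {S : Finset α} (h : 1 < S.card) {μ : ℝ}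
    (hsep : ∀ x ∈ S, ∀ y ∈ S, x ≠ y → μ ≤ dist x y) : μ ≤ divers S :=
  le_csInf (pairSet_nonempty h)
    (by rintro r ⟨x, hx, y, hy, hxy, rfl⟩; exact hsep x hx y hy hxy)

lemma dMin_le_dist {X : Finset α} {x y : α} (hx : x ∈ X) (hy : y ∈ X) (hxy : x ≠ y) :
    dMin X ≤ dist x y :=
  csInf_le (pairSet_finite X).bddBelow ⟨x, hx, y, hy, hxy, rfl⟩

lemma dist_le_dMax {X : Finset α} {x y : α} (hx : x ∈ X) (hy : y ∈ X) (hxy : x ≠ y) :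
    dist x y ≤ dMax X :=
  le_csSup (pairSet_finite X).bddAbove ⟨x, hx, y, hy, hxy, rfl⟩

lemma optSet_finite (X : Finset α) (k : ℕ) :
    {r : ℝ | ∃ T ⊆ X, T.card = k ∧ divers T = r}.Finite := by
  apply Set.Finite.subset ((X.powerset.finite_toSet).image divers)
  rintro r ⟨T, hT, _, rfl⟩
  exact ⟨T, by simpa [Finset.mem_powerset] using hT, rfl⟩

/-- Theorem 1: the `(1-ε)/2` approximation guarantee of the streaming algorithm for
unconstrained max–min diversity maximization. -/
theorem stmt_0 (X : Finset α) (k : ℕ) (ε : ℝ)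
    (hk : 2 ≤ k) (hkX : k ≤ X.card) (hε0 : 0 < ε) (hε1 : ε < 1)
    (S : ℝ → Finset α)
    (hS : ∀ μ ∈ grid X ε, GreedyCandidate μ k X (S μ)) :
    ∃ μ ∈ grid X ε, (S μ).card = k ∧
      (1 - ε) / 2 * OPTk X k ≤ divers (S μ) := by
  classical
  have h2X : 1 < X.card := lt_of_lt_of_le (by omega) hkX
  have hdmin_mem := (pairSet_nonempty h2X).csInf_mem (pairSet_finite X)
  have hdmin_pos : 0 < dMin X := by
    obtain ⟨x, hx, y, hy, hxy, h⟩ := hdmin_mem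
    rw [dMin, ← h]; exact dist_pos.mpr hxy
  have hdminmax : dMin X ≤ dMax X := by
    obtain ⟨x, hx, y, hy, hxy, h⟩ := hdmin_mem
    calc dMin X ≤ dist x y := dMin_le_dist hx hy hxy
    _ ≤ dMax X := dist_le_dMax hx hy hxy
  -- OPT is attained
  obtain ⟨T₀, hT₀sub, hT₀card⟩ := Finset.exists_subset_card_eq hkX
  have hoptne : {r : ℝ | ∃ T ⊆ X, T.card = k ∧ divers T = r}.Nonempty :=
    ⟨divers T₀, T₀, hT₀sub, hT₀card, rfl⟩
  have hOPTmem := hoptne.csSup_mem (optSet_finite X k)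
  obtain ⟨T, hTsub, hTcard, hTdiv⟩ := hOPTmem
  have hT2 : 1 < T.card := by omega
  have hOPT_ge : dMin X ≤ OPTk X k := by
    rw [OPTk, ← hTdiv]
    exact le_divers hT2 fun x hx y hy hxy => dMin_le_dist (hTsub hx) (hTsub hy) hxy
  have hOPTpos : 0 < OPTk X k := lt_of_lt_of_le hdmin_pos hOPT_ge
  have hOPT_le : OPTk X k ≤ dMax X := by
    obtain ⟨a, ha, b, hb, hab⟩ := Finset.one_lt_card.mp hT2
    rw [OPTk, ← hTdiv]
    calc divers T ≤ dist a b := divers_le_dist ha hb hab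
    _ ≤ dMax X := dist_le_dMax (hTsub ha) (hTsub hb) hab
  have hc : (0:ℝ) < 1 - ε := by linarith
  have hc1 : (1:ℝ) - ε < 1 := by linarith
  -- find least j with dMin/(1-ε)^j > OPT/2
  have hexJ : ∃ j : ℕ, OPTk X k / 2 < dMin X / (1 - ε) ^ j := by
    obtain ⟨n, hn⟩ := exists_pow_lt_of_lt_one
      (show (0:ℝ) < dMin X * 2 / OPTk X k by positivity) hc1
    refine ⟨n, ?_⟩
    rw [div_lt_div_iff₀ two_pos (pow_pos hc n)]
    have := (lt_div_iff₀ hOPTpos).mp hn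
    nlinarith
  set J := Nat.find hexJ with hJdef
  have hJspec : OPTk X k / 2 < dMin X / (1 - ε) ^ J := Nat.find_spec hexJ
  -- helper: diversity lower bound once card = k
  have keyfacts : ∀ μ ∈ grid X ε, (S μ).card = k → μ ≤ divers (S μ) := by
    intro μ hμ hcard
    obtain ⟨_, hsep, _, _⟩ := hS μ hμ
    exact le_divers (by omega) hsep
  rcases Nat.eq_zero_or_pos J with hJ0 | hJpos
  · -- case: dMin > OPT/2, use μ = dMin
    have hbig : OPTk X k / 2 < dMin X := by
      have := hJspec; rw [hJ0] at this; simpa using this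
    have hgrid : dMin X ∈ grid X ε := ⟨⟨0, by simp⟩, le_refl _, hdminmax⟩
    obtain ⟨hsub, hsep, hle, hcov⟩ := hS (dMin X) hgrid
    have hcard : (S (dMin X)).card = k := by
      by_contra hne
      have hlt : (S (dMin X)).card < k := lt_of_le_of_ne hle hne
      have hXsub : X ⊆ S (dMin X) := by
        intro y hy
        obtain ⟨s, hs, hd⟩ := hcov hlt y hy
        by_cases hys : y = s
        · rwa [hys]
        · exact absurd hd (not_lt.mpr (dMin_le_dist hy (hsub hs) hys))
      have := Finset.card_le_card hXsub
      omega
    refine ⟨dMin X, hgrid, hcard, ?_⟩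
    have := keyfacts _ hgrid hcard
    nlinarith
  · -- case J = j+1
    obtain ⟨j, hj⟩ : ∃ j, J = j + 1 := ⟨J - 1, by omega⟩
    have hnot : ¬ (OPTk X k / 2 < dMin X / (1 - ε) ^ j) :=
      Nat.find_min hexJ (by omega)
    have hμle : dMin X / (1 - ε) ^ j ≤ OPTk X k / 2 := not_lt.mp hnot
    set μ := dMin X / (1 - ε) ^ j with hμdef
    have hpowpos : (0:ℝ) < (1 - ε) ^ j := pow_pos hc j
    have hμ_ge_dmin : dMin X ≤ μ := by
      rw [hμdef, le_div_iff₀ hpowpos]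
      have hp1 : (1 - ε) ^ j ≤ 1 := pow_le_one₀ (le_of_lt hc) (by linarith)
      nlinarith
    have hgrid : μ ∈ grid X ε :=
      ⟨⟨j, rfl⟩, hμ_ge_dmin, by linarith⟩
    obtain ⟨hsub, hsep, hle, hcov⟩ := hS μ hgrid
    have hcard : (S μ).card = k := by
      by_contra hne
      have hlt : (S μ).card < k := lt_of_le_of_ne hle hne
      have hcov' := hcov hlt
      set f : α → α := fun y => if h : ∃ s ∈ S μ, dist y s < μ then h.choose else y with hf
      have hfmem : ∀ y ∈ X, f y ∈ S μ ∧ dist y (f y) < μ := by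
        intro y hy
        have h := hcov' y hy
        simp only [hf, dif_pos h]
        exact ⟨h.choose_spec.1, h.choose_spec.2⟩
      obtain ⟨t₁, ht₁, t₂, ht₂, htne, hteq⟩ :=
        Finset.exists_ne_map_eq_of_card_lt_of_maps_to
          (show (S μ).card < T.card by omega)
          (fun t ht => (hfmem t (hTsub ht)).1)
      have h1 := (hfmem t₁ (hTsub ht₁)).2
      have h2 := (hfmem t₂ (hTsub ht₂)).2
      have htri : dist t₁ t₂ ≤ dist t₁ (f t₁) + dist t₂ (f t₂) := by
        calc dist t₁ t₂ ≤ dist t₁ (f t₁) + dist (f t₁) t₂ := dist_triangle _ _ _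
        _ = dist t₁ (f t₁) + dist t₂ (f t₂) := by rw [hteq, dist_comm (f t₂) t₂]
      have hdge : OPTk X k ≤ dist t₁ t₂ := by
        rw [OPTk, ← hTdiv]; exact divers_le_dist ht₁ ht₂ htne
      linarith
    refine ⟨μ, hgrid, hcard, ?_⟩
    have hdiv := keyfacts _ hgrid hcard
    -- μ > (1-ε) OPT / 2
    have hJs : OPTk X k / 2 < dMin X / ((1 - ε) ^ j * (1 - ε)) := by
      rw [← pow_succ, ← hj]; exact hJspec
    rw [← div_div] at hJs
    have := (lt_div_iff₀ hc).mp hJs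
    nlinarith
end

section
/- Let X be a finite metric space partitioned into two disjoint groups X_1, X_2, let k_1, k_2 ≥ 1 with |X_i| ≥ k_i for i = 1,2 and k = k_1 + k_2 ≥ 2, and let ε ∈ (0,1). Suppose that for every μ in the grid U there are: a greedy candidate S_μ on Y = X with threshold μ and capacity k, and for each i ∈ {1,2} a greedy candidate S_{μ,i} on Y = X_i with threshold μ and capacity k_i. Let U′ = { μ ∈ U : |S_μ| = k and |S_{μ,i}| = k_i for i = 1,2 }. Then U′ is nonempty and its maximum μ′ satisfies μ′ ≥ ((1−ε)/2) · OPT_f. (Lemma 1.) -/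
open Finset

variable {α : Type*} [MetricSpace α] [DecidableEq α]

lemma pairDists_eq (X : Finset α) :
    {r : ℝ | ∃ x ∈ X, ∃ y ∈ X, x ≠ y ∧ dist x y = r} =
    ↑(((X ×ˢ X).filter (fun p => p.1 ≠ p.2)).image (fun p => dist p.1 p.2)) := by
  ext r
  simp only [Set.mem_setOf_eq, coe_image, Set.mem_image, mem_coe, mem_filter, mem_product]
  constructor
  · rintro ⟨x, hx, y, hy, hxy, h⟩; exact ⟨(x, y), ⟨⟨hx, hy⟩, hxy⟩, h⟩
  · rintro ⟨⟨x, y⟩, ⟨⟨hx, hy⟩, hxy⟩, h⟩; exact ⟨x, hx, y, hy, hxy, h⟩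

lemma pairDists_finite (X : Finset α) :
    {r : ℝ | ∃ x ∈ X, ∃ y ∈ X, x ≠ y ∧ dist x y = r}.Finite := by
  rw [pairDists_eq]; exact Finset.finite_toSet _

lemma aux_pow_bound {ε d B : ℝ} (hε0 : 0 < ε) (hε1 : ε < 1) (hd : 0 < d)
    {j : ℕ} (h : d / (1 - ε) ^ j ≤ B) : (j : ℝ) ≤ B / d / ε := by
  have h1 : 0 < 1 - ε := by linarith
  have hp : 0 < (1 - ε) ^ j := pow_pos h1 j
  have hb : (1 : ℝ) + j * ε ≤ (1 + ε) ^ j := one_add_mul_le_pow (by linarith) j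
  have hle : (1 + ε : ℝ) ≤ 1 / (1 - ε) := by
    rw [le_div_iff₀ h1]; nlinarith
  have hb2 : ((1 + ε : ℝ)) ^ j ≤ (1 / (1 - ε)) ^ j :=
    pow_le_pow_left₀ (by linarith) hle j
  have hb3 : (1 : ℝ) + j * ε ≤ 1 / (1 - ε) ^ j := by
    rw [← one_div_pow]; exact hb.trans hb2
  have hkey : d * (1 + j * ε) ≤ B := by
    calc d * (1 + j * ε) ≤ d * (1 / (1 - ε) ^ j) :=
          mul_le_mul_of_nonneg_left hb3 hd.le
      _ = d / (1 - ε) ^ j := by rw [mul_one_div]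
      _ ≤ B := h
  rw [div_div, le_div_iff₀ (by positivity)]
  nlinarith

lemma full_of_opt {μ R : ℝ} {c : ℕ} {Y S T : Finset α}
    (hG : GreedyCandidate μ c Y S) (hT : T ⊆ Y) (hTc : c ≤ T.card)
    (hsep : ∀ x ∈ T, ∀ y ∈ T, x ≠ y → R ≤ dist x y) (hμR : 2 * μ ≤ R) :
    S.card = c := by
  classical
  obtain ⟨hSY, _, hle, hcov⟩ := hG
  by_contra hne
  have hlt : S.card < c := lt_of_le_of_ne hle hne
  have hcov' := hcov hlt
  have hmap : ∀ t ∈ T, ∃ s ∈ S, dist t s < μ := fun t ht => hcov' t (hT ht)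
  choose f hfS hfd using hmap
  set g : α → α := fun t => if h : t ∈ T then f t h else t with hg
  have hmaps : ∀ t ∈ T, g t ∈ S := by
    intro t ht; simp only [hg, dif_pos ht]; exact hfS t ht
  obtain ⟨x, hx, y, hy, hxy, hxyeq⟩ :=
    Finset.exists_ne_map_eq_of_card_lt_of_maps_to (lt_of_lt_of_le hlt hTc) hmaps
  have hdx : dist x (g x) < μ := by simp only [hg, dif_pos hx]; exact hfd x hx
  have hdy : dist y (g y) < μ := by simp only [hg, dif_pos hy]; exact hfd y hy
  have : dist x y ≤ dist x (g x) + dist (g y) y := by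
    rw [hxyeq]; exact dist_triangle x (g y) y
  have h1 := hsep x hx y hy hxy
  rw [dist_comm (g y) y] at this
  linarith

lemma full_at_dMin {c : ℕ} {X Y S : Finset α} (hYX : Y ⊆ X)
    (hdm : ∀ x ∈ X, ∀ y ∈ X, x ≠ y → dMin X ≤ dist x y)
    (hG : GreedyCandidate (dMin X) c Y S) (hc : c ≤ Y.card) : S.card = c := by
  obtain ⟨hSY, _, hle, hcov⟩ := hG
  by_contra hne
  have hlt : S.card < c := lt_of_le_of_ne hle hne
  have hsub : Y ⊆ S := by
    intro y hy
    obtain ⟨s, hs, hd⟩ := hcov hlt y hy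
    rcases eq_or_ne y s with rfl | h
    · exact hs
    · exact absurd hd (not_lt.mpr (hdm y (hYX hy) s (hYX (hSY hs)) h))
  have := Finset.card_le_card hsub
  omega

/-- Lemma 1: the set `U'` of guesses whose three candidates are full is nonempty, and
its maximum `μ'` satisfies `μ' ≥ ((1-ε)/2) · OPT_f` (two groups). -/
theorem stmt_3 (X X₁ X₂ : Finset α) (k₁ k₂ : ℕ) (ε : ℝ)
    (hdisj : Disjoint X₁ X₂) (hunion : X = X₁ ∪ X₂)
    (hne₁ : X₁.Nonempty) (hne₂ : X₂.Nonempty)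
    (hk₁ : 1 ≤ k₁) (hk₂ : 1 ≤ k₂)
    (hc₁ : k₁ ≤ X₁.card) (hc₂ : k₂ ≤ X₂.card) (hk : 2 ≤ k₁ + k₂)
    (hε0 : 0 < ε) (hε1 : ε < 1)
    (S₀ S₁ S₂ : ℝ → Finset α)
    (hS₀ : ∀ μ ∈ grid X ε, GreedyCandidate μ (k₁ + k₂) X (S₀ μ))
    (hS₁ : ∀ μ ∈ grid X ε, GreedyCandidate μ k₁ X₁ (S₁ μ))
    (hS₂ : ∀ μ ∈ grid X ε, GreedyCandidate μ k₂ X₂ (S₂ μ)) :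
    ∃ μ', IsGreatest {μ ∈ grid X ε |
        (S₀ μ).card = k₁ + k₂ ∧ (S₁ μ).card = k₁ ∧ (S₂ μ).card = k₂} μ' ∧
      (1 - ε) / 2 *
        sSup {r : ℝ | ∃ S ⊆ X, (S ∩ X₁).card = k₁ ∧ (S ∩ X₂).card = k₂ ∧ divers S = r}
        ≤ μ' := by
  classical
  obtain ⟨a, ha⟩ := hne₁
  obtain ⟨b, hb⟩ := hne₂
  have hab : a ≠ b := by
    rintro rfl; exact (Finset.disjoint_left.mp hdisj) ha hb
  have haX : a ∈ X := by rw [hunion]; exact mem_union_left _ ha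
  have hbX : b ∈ X := by rw [hunion]; exact mem_union_right _ hb
  set D : Set ℝ := {r : ℝ | ∃ x ∈ X, ∃ y ∈ X, x ≠ y ∧ dist x y = r} with hD
  have hDfin : D.Finite := pairDists_finite X
  have hDne : D.Nonempty := ⟨dist a b, a, haX, b, hbX, hab, rfl⟩
  have hdmin_mem : dMin X ∈ D := hDne.csInf_mem hDfin
  have hdmin_pos : 0 < dMin X := by
    obtain ⟨x, hx, y, hy, hxy, he⟩ := hdmin_mem
    rw [← he]; exact dist_pos.mpr hxy
  have hdm_le : ∀ x ∈ X, ∀ y ∈ X, x ≠ y → dMin X ≤ dist x y :=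
    fun x hx y hy h => csInf_le hDfin.bddBelow ⟨x, hx, y, hy, h, rfl⟩
  have hle_dmax : ∀ x ∈ X, ∀ y ∈ X, x ≠ y → dist x y ≤ dMax X :=
    fun x hx y hy h => le_csSup hDfin.bddAbove ⟨x, hx, y, hy, h, rfl⟩
  have hdd : dMin X ≤ dMax X :=
    le_trans (hdm_le a haX b hbX hab) (hle_dmax a haX b hbX hab)
  have h1ε : 0 < 1 - ε := by linarith
  have hXcard : X₁.card + X₂.card ≤ X.card := by
    rw [hunion, card_union_of_disjoint hdisj]
  -- dMin is in the grid
  have hdmin_grid : dMin X ∈ grid X ε := ⟨⟨0, by simp⟩, le_refl _, hdd⟩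
  -- U'
  set U' : Set ℝ := {μ ∈ grid X ε |
      (S₀ μ).card = k₁ + k₂ ∧ (S₁ μ).card = k₁ ∧ (S₂ μ).card = k₂} with hU'
  -- dMin ∈ U'
  have hdmin_U' : dMin X ∈ U' := by
    refine ⟨hdmin_grid, ?_, ?_, ?_⟩
    · exact full_at_dMin (Finset.Subset.refl X) hdm_le (hS₀ _ hdmin_grid)
        (le_trans (by omega) hXcard)
    · exact full_at_dMin (by rw [hunion]; exact subset_union_left) hdm_le
        (hS₁ _ hdmin_grid) hc₁
    · exact full_at_dMin (by rw [hunion]; exact subset_union_right) hdm_le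
        (hS₂ _ hdmin_grid) hc₂
  -- grid is finite
  set N : ℕ := ⌈dMax X / dMin X / ε⌉₊ with hN
  have hgrid_bound : ∀ μ ∈ grid X ε, ∃ j ≤ N, μ = dMin X / (1 - ε) ^ j := by
    rintro μ ⟨⟨j, rfl⟩, _, hub⟩
    refine ⟨j, ?_, rfl⟩
    have := aux_pow_bound hε0 hε1 hdmin_pos hub
    exact_mod_cast this.trans (Nat.le_ceil _)
  have hgrid_fin : (grid X ε).Finite := by
    apply Set.Finite.subset (Set.finite_Iic N |>.image (fun j => dMin X / (1 - ε) ^ j))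
    intro μ hμ
    obtain ⟨j, hj, rfl⟩ := hgrid_bound μ hμ
    exact ⟨j, hj, rfl⟩
  have hU'fin : U'.Finite := hgrid_fin.subset (fun μ hμ => hμ.1)
  have hU'ne : U'.Nonempty := ⟨dMin X, hdmin_U'⟩
  -- greatest element of U'
  have hgreat : IsGreatest U' (sSup U') :=
    ⟨hU'ne.csSup_mem hU'fin, fun x hx => le_csSup hU'fin.bddAbove hx⟩
  set μ' := sSup U' with hμ'
  refine ⟨μ', hgreat, ?_⟩
  have hdmin_le_μ' : dMin X ≤ μ' := hgreat.2 hdmin_U'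
  -- W and R = OPT_f
  set W : Set ℝ :=
    {r : ℝ | ∃ S ⊆ X, (S ∩ X₁).card = k₁ ∧ (S ∩ X₂).card = k₂ ∧ divers S = r} with hW
  have hWfin : W.Finite := by
    apply Set.Finite.subset ((X.powerset.finite_toSet).image divers)
    rintro r ⟨S, hSX, _, _, rfl⟩
    exact ⟨S, by simpa using hSX, rfl⟩
  have hWne : W.Nonempty := by
    obtain ⟨T₁, hT₁s, hT₁c⟩ := Finset.exists_subset_card_eq hc₁
    obtain ⟨T₂, hT₂s, hT₂c⟩ := Finset.exists_subset_card_eq hc₂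
    have hd12 : Disjoint T₂ X₁ := (hdisj.symm).mono_left hT₂s
    have hd21 : Disjoint T₁ X₂ := hdisj.mono_left hT₁s
    refine ⟨divers (T₁ ∪ T₂), T₁ ∪ T₂, ?_, ?_, ?_, rfl⟩
    · rw [hunion]; exact union_subset_union hT₁s hT₂s
    · rw [union_inter_distrib_right, inter_eq_left.mpr hT₁s,
        Finset.disjoint_iff_inter_eq_empty.mp hd12, union_empty]
      exact hT₁c
    · rw [union_inter_distrib_right, inter_eq_left.mpr hT₂s,
        Finset.disjoint_iff_inter_eq_empty.mp hd21, empty_union]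
      exact hT₂c
  set R := sSup W with hR
  obtain ⟨Sf, hSfX, hSf₁, hSf₂, hSfdiv⟩ : R ∈ W := hWne.csSup_mem hWfin
  -- Sf has card k₁ + k₂
  have hSfeq : Sf = (Sf ∩ X₁) ∪ (Sf ∩ X₂) := by
    rw [← inter_union_distrib_left, ← hunion, inter_eq_left.mpr hSfX]
  have hSfcard : Sf.card = k₁ + k₂ := by
    have hdisj12 : Disjoint (Sf ∩ X₁) (Sf ∩ X₂) :=
      hdisj.mono inter_subset_right inter_subset_right
    rw [hSfeq, card_union_of_disjoint hdisj12, hSf₁, hSf₂]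
  -- Sf is R-separated
  have hSfsep : ∀ x ∈ Sf, ∀ y ∈ Sf, x ≠ y → R ≤ dist x y := by
    intro x hx y hy h
    rw [← hSfdiv]
    exact csInf_le (pairDists_finite Sf).bddBelow ⟨x, hx, y, hy, h, rfl⟩
  -- R is a distance of a distinct pair of X
  have hRmem : ∃ x ∈ Sf, ∃ y ∈ Sf, x ≠ y ∧ dist x y = R := by
    have hcard2 : 1 < Sf.card := by omega
    obtain ⟨x, hx, y, hy, hxy⟩ := Finset.one_lt_card.mp hcard2
    have hne : {r : ℝ | ∃ x ∈ Sf, ∃ y ∈ Sf, x ≠ y ∧ dist x y = r}.Nonempty :=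
      ⟨dist x y, x, hx, y, hy, hxy, rfl⟩
    have := hne.csInf_mem (pairDists_finite Sf)
    rw [show sInf {r : ℝ | ∃ x ∈ Sf, ∃ y ∈ Sf, x ≠ y ∧ dist x y = r} = divers Sf from rfl,
      hSfdiv] at this
    exact this
  obtain ⟨x₀, hx₀, y₀, hy₀, hxy₀, hdistR⟩ := hRmem
  have hRdmin : dMin X ≤ R := hdistR ▸ hdm_le x₀ (hSfX hx₀) y₀ (hSfX hy₀) hxy₀
  have hRdmax : R ≤ dMax X := hdistR ▸ hle_dmax x₀ (hSfX hx₀) y₀ (hSfX hy₀) hxy₀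
  have hRpos : 0 < R := lt_of_lt_of_le hdmin_pos hRdmin
  -- fullness for 2μ ≤ R
  have hfull : ∀ μ ∈ grid X ε, 2 * μ ≤ R → μ ∈ U' := by
    intro μ hμ h2μ
    refine ⟨hμ, ?_, ?_, ?_⟩
    · exact full_of_opt (hS₀ μ hμ) hSfX (le_of_eq hSfcard.symm) hSfsep h2μ
    · refine full_of_opt (hS₁ μ hμ) inter_subset_right (le_of_eq hSf₁.symm)
        (fun x hx y hy h => hSfsep x (mem_of_mem_inter_left hx)
          y (mem_of_mem_inter_left hy) h) h2μ
    · refine full_of_opt (hS₂ μ hμ) inter_subset_right (le_of_eq hSf₂.symm)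
        (fun x hx y hy h => hSfsep x (mem_of_mem_inter_left hx)
          y (mem_of_mem_inter_left hy) h) h2μ
  -- final case analysis
  by_cases hcase : dMin X ≤ R / 2
  · -- find largest grid point ≤ R/2
    set P : ℕ → Prop := fun j => dMin X / (1 - ε) ^ j ≤ R / 2 with hP
    have hP0 : P 0 := by simpa [hP] using hcase
    have hPbdd : ∀ j, P j → j ≤ N := by
      intro j hj
      have hj' : dMin X / (1 - ε) ^ j ≤ dMax X := le_trans hj (by linarith)
      have := aux_pow_bound hε0 hε1 hdmin_pos hj'
      exact_mod_cast this.trans (Nat.le_ceil _)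
    set j₀ := Nat.findGreatest P N with hj₀
    have hPj₀ : P j₀ := Nat.findGreatest_spec (Nat.zero_le N) hP0
    have hnot : ¬ P (j₀ + 1) := by
      intro hPs
      have h1 : j₀ + 1 ≤ N := hPbdd _ hPs
      exact Nat.findGreatest_is_greatest (Nat.lt_succ_self j₀) h1 hPs
    set μ := dMin X / (1 - ε) ^ j₀ with hμdef
    have hpj : 0 < (1 - ε) ^ j₀ := pow_pos h1ε j₀
    have hμgrid : μ ∈ grid X ε := by
      refine ⟨⟨j₀, rfl⟩, ?_, le_trans hPj₀ (by linarith)⟩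
      rw [le_div_iff₀ hpj]
      nlinarith [pow_le_one₀ (n := j₀) h1ε.le (by linarith : (1:ℝ) - ε ≤ 1)]
    have hμU' : μ ∈ U' := hfull μ hμgrid (by
      have : μ ≤ R / 2 := hPj₀
      linarith)
    have hμle : μ ≤ μ' := hgreat.2 hμU'
    have hstep : R / 2 < μ / (1 - ε) := by
      have : ¬ (dMin X / (1 - ε) ^ (j₀ + 1) ≤ R / 2) := hnot
      push_neg at this
      calc R / 2 < dMin X / (1 - ε) ^ (j₀ + 1) := this
        _ = μ / (1 - ε) := by rw [hμdef, div_div, ← pow_succ]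
    have : R / 2 * (1 - ε) < μ := by
      rw [lt_div_iff₀ h1ε] at hstep
      linarith
    nlinarith
  · -- R/2 < dMin X ≤ μ'
    push_neg at hcase
    nlinarith [mul_nonneg hε0.le hRpos.le]
end

section
/- Let X be a finite metric space partitioned into two disjoint groups X_1, X_2, let k_1, k_2 ≥ 1, k = k_1 + k_2, and let μ > 0. Suppose A ⊆ X is μ-separated with |A| = k, and for each i ∈ {1,2}, A_i ⊆ X_i is μ-separated with |A_i| = k_i. Then there exists a set S ⊆ A ∪ A_1 ∪ A_2 with |S ∩ X_1| = k_1, |S ∩ X_2| = k_2, and S is (μ/2)-separated. (The swap-based balancing step of SFDM1: a fair set with all pairwise distances at least μ/2 can be assembled from the three candidates; Lemma 2.) -/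
open Finset

variable {α : Type*} [MetricSpace α] [DecidableEq α]

lemma swap_aux (μ : ℝ) (hμ : 0 < μ) (X₁ X₂ : Finset α) (hdisj : Disjoint X₁ X₂)
    (A B : Finset α) (hB₁ : B ⊆ X₁) (hBsep : Separated μ B) (hAsep : Separated μ A)
    (k₁ k₂ : ℕ) (hBcard : B.card = k₁) :
    ∀ n : ℕ, ∀ S : Finset α, S ⊆ A ∪ B → S ⊆ X₁ ∪ X₂ → (S ∩ X₂) ⊆ A →
      Separated (μ / 2) S → S.card = k₁ + k₂ → (S ∩ X₁).card + n = k₁ →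
      ∃ S' ⊆ A ∪ B, (S' ∩ X₁).card = k₁ ∧ (S' ∩ X₂).card = k₂ ∧ Separated (μ / 2) S' := by
  intro n
  induction n with
  | zero =>
    intro S hSAB hSX hSA hSsep hScard hn
    have hsplit : (S ∩ X₁).card + (S ∩ X₂).card = S.card := by
      rw [← Finset.card_union_of_disjoint
        (Finset.disjoint_of_subset_left (Finset.inter_subset_right)
          (Finset.disjoint_of_subset_right (Finset.inter_subset_right) hdisj)),
        ← Finset.inter_union_distrib_left, Finset.inter_eq_left.2 hSX]
    exact ⟨S, hSAB, by omega, by omega, hSsep⟩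
  | succ n ih =>
    intro S hSAB hSX hSA hSsep hScard hn
    have hsplit : (S ∩ X₁).card + (S ∩ X₂).card = S.card := by
      rw [← Finset.card_union_of_disjoint
        (Finset.disjoint_of_subset_left (Finset.inter_subset_right)
          (Finset.disjoint_of_subset_right (Finset.inter_subset_right) hdisj)),
        ← Finset.inter_union_distrib_left, Finset.inter_eq_left.2 hSX]
    -- find x ∈ B far from all of S ∩ X₁
    have hx : ∃ x ∈ B, ∀ s ∈ S ∩ X₁, μ / 2 ≤ dist x s := by
      by_contra hcon
      push_neg at hcon
      classical
      have hmap : ∀ b : α, b ∈ B → ∃ s, s ∈ S ∩ X₁ ∧ dist b s < μ / 2 := by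
        intro b hb
        obtain ⟨s, hs, hds⟩ := hcon b hb
        exact ⟨s, hs, hds⟩
      choose! f hf hfd using hmap
      obtain ⟨b, hb, b', hb', hbne, hfe⟩ :=
        Finset.exists_ne_map_eq_of_card_lt_of_maps_to (t := S ∩ X₁)
          (by omega : (S ∩ X₁).card < B.card) (fun b hb => hf b hb)
      have : μ ≤ dist b b' := hBsep b hb b' hb' hbne
      have h1 := hfd b hb
      have h2 := hfd b' hb'
      rw [hfe] at h1
      have := dist_triangle b (f b') b'
      rw [dist_comm (f b') b'] at this
      linarith
    obtain ⟨x, hxB, hxfar⟩ := hx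
    have hxX₁ : x ∈ X₁ := hB₁ hxB
    have hxnX₂ : x ∉ X₂ := fun h => (Finset.disjoint_left.1 hdisj hxX₁) h
    have hxnS : x ∉ S := by
      intro hxS
      have := hxfar x (Finset.mem_inter.2 ⟨hxS, hxX₁⟩)
      simp at this; linarith
    -- S ∩ X₂ is nonempty
    have hne₂ : (S ∩ X₂).Nonempty := Finset.card_pos.1 (by omega)
    -- pick y ∈ S ∩ X₂ such that any point of S ∩ X₂ close to x equals y
    obtain ⟨y, hy, hyuniq⟩ : ∃ y ∈ S ∩ X₂, ∀ s ∈ S ∩ X₂, dist x s < μ / 2 → s = y := by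
      by_cases hT : ∃ t ∈ S ∩ X₂, dist x t < μ / 2
      · obtain ⟨t, ht, hdt⟩ := hT
        refine ⟨t, ht, fun s hs hds => ?_⟩
        by_contra hst
        have : μ ≤ dist s t := hAsep s (hSA hs) t (hSA ht) hst
        have := dist_triangle s x t
        rw [dist_comm s x] at this
        linarith
      · push_neg at hT
        obtain ⟨t, ht⟩ := hne₂
        exact ⟨t, ht, fun s hs hds => absurd hds (not_lt.2 (hT s hs))⟩
    have hyS : y ∈ S := (Finset.mem_inter.1 hy).1
    have hyX₂ : y ∈ X₂ := (Finset.mem_inter.1 hy).2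
    have hynX₁ : y ∉ X₁ := fun h => (Finset.disjoint_left.1 hdisj h) hyX₂
    set S' : Finset α := insert x (S.erase y) with hS'def
    have hS'AB : S' ⊆ A ∪ B := by
      intro z hz
      rcases Finset.mem_insert.1 hz with rfl | hz
      · exact Finset.mem_union_right _ hxB
      · exact hSAB (Finset.mem_of_mem_erase hz)
    have hS'X : S' ⊆ X₁ ∪ X₂ := by
      intro z hz
      rcases Finset.mem_insert.1 hz with rfl | hz
      · exact Finset.mem_union_left _ hxX₁
      · exact hSX (Finset.mem_of_mem_erase hz)
    have hS'X₂ : S' ∩ X₂ ⊆ A := by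
      intro z hz
      obtain ⟨hz1, hz2⟩ := Finset.mem_inter.1 hz
      rcases Finset.mem_insert.1 hz1 with rfl | hz1
      · exact absurd hz2 hxnX₂
      · exact hSA (Finset.mem_inter.2 ⟨Finset.mem_of_mem_erase hz1, hz2⟩)
    have hS'sep : Separated (μ / 2) S' := by
      intro a ha b hb hab
      rw [hS'def, Finset.mem_insert] at ha hb
      have key : ∀ c ∈ S.erase y, μ / 2 ≤ dist x c := by
        intro c hc
        have hcS : c ∈ S := Finset.mem_of_mem_erase hc
        have hcX : c ∈ X₁ ∪ X₂ := hSX hcS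
        rcases Finset.mem_union.1 hcX with h1 | h2
        · exact hxfar c (Finset.mem_inter.2 ⟨hcS, h1⟩)
        · by_contra hlt
          push_neg at hlt
          have := hyuniq c (Finset.mem_inter.2 ⟨hcS, h2⟩) hlt
          exact (Finset.ne_of_mem_erase hc) this
      rcases ha with rfl | ha
      · rcases hb with rfl | hb
        · exact absurd rfl hab
        · exact key b hb
      · rcases hb with rfl | hb
        · rw [dist_comm]; exact key a ha
        · exact hSsep a (Finset.mem_of_mem_erase ha) b (Finset.mem_of_mem_erase hb) hab
    have hxnE : x ∉ S.erase y := fun h => hxnS (Finset.mem_of_mem_erase h)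
    have hS'card : S'.card = k₁ + k₂ := by
      rw [hS'def, Finset.card_insert_of_notMem hxnE, Finset.card_erase_of_mem hyS]
      omega
    have hS'X₁ : S' ∩ X₁ = insert x (S ∩ X₁) := by
      rw [hS'def]
      ext z
      simp only [Finset.mem_inter, Finset.mem_insert, Finset.mem_erase]
      constructor
      · rintro ⟨rfl | ⟨hzy, hzS⟩, hzX⟩
        · exact Or.inl rfl
        · exact Or.inr ⟨hzS, hzX⟩
      · rintro (rfl | ⟨hzS, hzX⟩)
        · exact ⟨Or.inl rfl, hxX₁⟩
        · exact ⟨Or.inr ⟨fun h => hynX₁ (h ▸ hzX), hzS⟩, hzX⟩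
    have hxnSX₁ : x ∉ S ∩ X₁ := fun h => hxnS (Finset.mem_inter.1 h).1
    have hcard₁ : (S' ∩ X₁).card + n = k₁ := by
      rw [hS'X₁, Finset.card_insert_of_notMem hxnSX₁]; omega
    exact ih S' hS'AB hS'X hS'X₂ hS'sep hS'card hcard₁

/-- Lemma 2 (swap-based balancing of SFDM1): from a `μ`-separated set `A` of size
`k = k₁ + k₂` and `μ`-separated group-specific sets `A₁ ⊆ X₁`, `A₂ ⊆ X₂` of sizes
`k₁, k₂`, one can assemble a fair `(μ/2)`-separated set `S ⊆ A ∪ A₁ ∪ A₂`. -/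
theorem stmt_5 (X X₁ X₂ : Finset α) (k₁ k₂ : ℕ) (μ : ℝ)
    (hdisj : Disjoint X₁ X₂) (hunion : X = X₁ ∪ X₂)
    (hne₁ : X₁.Nonempty) (hne₂ : X₂.Nonempty)
    (hk₁ : 1 ≤ k₁) (hk₂ : 1 ≤ k₂) (hμ : 0 < μ)
    (A A₁ A₂ : Finset α)
    (hA : A ⊆ X ∧ Separated μ A ∧ A.card = k₁ + k₂)
    (hA₁ : A₁ ⊆ X₁ ∧ Separated μ A₁ ∧ A₁.card = k₁)
    (hA₂ : A₂ ⊆ X₂ ∧ Separated μ A₂ ∧ A₂.card = k₂) :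
    ∃ S ⊆ A ∪ A₁ ∪ A₂,
      (S ∩ X₁).card = k₁ ∧ (S ∩ X₂).card = k₂ ∧ Separated (μ / 2) S := by
  obtain ⟨hAX, hAsep, hAcard⟩ := hA
  obtain ⟨hA₁X, hA₁sep, hA₁card⟩ := hA₁
  obtain ⟨hA₂X, hA₂sep, hA₂card⟩ := hA₂
  have hAX' : A ⊆ X₁ ∪ X₂ := hunion ▸ hAX
  have hAsep' : Separated (μ / 2) A := fun a ha b hb hab => by
    have := hAsep a ha b hb hab; linarith
  have hsplit : (A ∩ X₁).card + (A ∩ X₂).card = A.card := by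
    rw [← Finset.card_union_of_disjoint
      (Finset.disjoint_of_subset_left (Finset.inter_subset_right)
        (Finset.disjoint_of_subset_right (Finset.inter_subset_right) hdisj)),
      ← Finset.inter_union_distrib_left, Finset.inter_eq_left.2 hAX']
  by_cases hcase : (A ∩ X₁).card ≤ k₁
  · obtain ⟨S, hS1, hS2, hS3, hS4⟩ :=
      swap_aux μ hμ X₁ X₂ hdisj A A₁ hA₁X hA₁sep hAsep k₁ k₂ hA₁card
        (k₁ - (A ∩ X₁).card) A Finset.subset_union_left hAX'
        Finset.inter_subset_left hAsep' hAcard (by omega)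
    exact ⟨S, fun z hz => by
      rcases Finset.mem_union.1 (hS1 hz) with h | h
      · exact Finset.mem_union_left _ (Finset.mem_union_left _ h)
      · exact Finset.mem_union_left _ (Finset.mem_union_right _ h), hS2, hS3, hS4⟩
  · have hcase₂ : (A ∩ X₂).card ≤ k₂ := by omega
    obtain ⟨S, hS1, hS2, hS3, hS4⟩ :=
      swap_aux μ hμ X₂ X₁ hdisj.symm A A₂ hA₂X hA₂sep hAsep k₂ k₁ hA₂card
        (k₂ - (A ∩ X₂).card) A Finset.subset_union_left
        (Finset.union_comm X₁ X₂ ▸ hAX')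
        Finset.inter_subset_left hAsep' (by omega) (by omega)
    exact ⟨S, fun z hz => by
      rcases Finset.mem_union.1 (hS1 hz) with h | h
      · exact Finset.mem_union_left _ (Finset.mem_union_left _ h)
      · exact Finset.mem_union_right _ h, hS3, hS2, hS4⟩
end

section
/- Let P be a finite set in a metric space, let μ > 0 and m ≥ 1, and suppose P = A_0 ∪ A_1 ∪ ⋯ ∪ A_m where each A_j is μ-separated. Consider the chain relation ~ on P with threshold τ = μ/(m+1). Then: (i) if x ~ y and x, y ∈ A_j for some j ∈ {0,…,m}, then x = y; (ii) if x ~ y then d(x,y) < (m/(m+1)) · μ; and (iii) every equivalence class of ~ contains at most m+1 elements. (Lemma 3: properties of the clusters formed in the post-processing of SFDM2.) -/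
open Finset

variable {α : Type*} [MetricSpace α] [DecidableEq α]

/-- Lemma 3: properties of the clusters (chain-relation classes with threshold
`μ/(m+1)`) of `P = A₀ ∪ ⋯ ∪ A_m`, each `A_j` being `μ`-separated. -/
theorem stmt_7 (P : Finset α) (m : ℕ) (hm : 1 ≤ m) (μ : ℝ) (hμ : 0 < μ)
    (A : Fin (m + 1) → Finset α)
    (hP : P = Finset.univ.biUnion A)
    (hsep : ∀ j, Separated μ (A j)) :
    (∀ x y, ChainRel P (μ / ((m : ℝ) + 1)) x y →
      ∀ j, x ∈ A j → y ∈ A j → x = y) ∧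
    (∀ x ∈ P, ∀ y ∈ P, ChainRel P (μ / ((m : ℝ) + 1)) x y →
      dist x y < (m : ℝ) / ((m : ℝ) + 1) * μ) ∧
    (∀ x ∈ P, ({y : α | y ∈ P ∧ ChainRel P (μ / ((m : ℝ) + 1)) x y} : Set α).ncard
      ≤ m + 1) := by
  classical
  set τ : ℝ := μ / ((m : ℝ) + 1) with hτdef
  have hm1 : (0:ℝ) < (m:ℝ) + 1 := by positivity
  have hτpos : 0 < τ := by rw [hτdef]; positivity
  have hτμ : ((m:ℝ) + 1) * τ = μ := by rw [hτdef]; field_simp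
  set step : α → α → Prop := fun x y => x ∈ P ∧ y ∈ P ∧ dist x y < τ with hstepdef
  -- choose a class for each point of P
  have hclsex : ∀ x : α, x ∈ P → ∃ j : Fin (m+1), x ∈ A j := by
    intro x hx
    rw [hP] at hx
    simpa using Finset.mem_biUnion.mp hx
  let cls : α → Fin (m+1) := fun x => if h : ∃ j, x ∈ A j then h.choose else 0
  have hcls : ∀ x ∈ P, x ∈ A (cls x) := by
    intro x hx
    obtain ⟨j, hj⟩ := hclsex x hx
    have h : ∃ j, x ∈ A j := ⟨j, hj⟩
    simp only [cls, dif_pos h]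
    exact h.choose_spec
  -- distance along a chain
  have hdist : ∀ (n : ℕ) (g : ℕ → α), 1 ≤ n → (∀ i < n, step (g i) (g (i+1))) →
      dist (g 0) (g n) < (n : ℝ) * τ := by
    intro n
    induction n with
    | zero => intro g h; omega
    | succ n IH =>
      intro g _ hg
      rcases Nat.eq_zero_or_pos n with h0 | h0
      · subst h0
        have := (hg 0 (by omega)).2.2
        simpa using this
      · have h1 := IH g h0 (fun i hi => hg i (by omega))
        have h2 := (hg n (by omega)).2.2
        have h3 := dist_triangle (g 0) (g n) (g (n+1))
        push_cast
        push_cast at h1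
        linarith
  -- surgery: shortcut a chain over a repeated point
  have hsurg : ∀ (n : ℕ) (g : ℕ → α) (a b : ℕ), a < b → b ≤ n →
      (∀ i < n, step (g i) (g (i+1))) → g a = g b →
      ∃ g' : ℕ → α, (∀ i < n - (b-a), step (g' i) (g' (i+1))) ∧
        g' 0 = g 0 ∧ g' (n-(b-a)) = g n := by
    intro n g a b hab hbn hg hgab
    refine ⟨fun i => if i ≤ a then g i else g (i + (b-a)), ?_, ?_, ?_⟩
    · intro i hi
      dsimp only
      rcases lt_trichotomy i a with h | h | h
      · simp only [if_pos (le_of_lt h), if_pos (by omega : i+1 ≤ a)]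
        exact hg i (by omega)
      · rw [if_pos h.le, if_neg (by omega : ¬ i+1 ≤ a), h, hgab]
        have he : a + 1 + (b - a) = b + 1 := by omega
        rw [he]
        exact hg b (by omega)
      · simp only [if_neg (by omega : ¬ i ≤ a), if_neg (by omega : ¬ i+1 ≤ a)]
        have he : i + 1 + (b-a) = (i + (b-a)) + 1 := by omega
        rw [he]
        exact hg (i + (b-a)) (by omega)
    · simp
    · dsimp only
      by_cases h : n - (b-a) ≤ a
      · have h1 : n - (b - a) = a := by omega
        have h2 : b = n := by omega
        rw [if_pos h, h1, hgab, h2]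
      · simp only [if_neg h]
        congr 1
        omega
  -- key lemma: chain endpoints in the same class coincide
  have key : ∀ n : ℕ, ∀ g : ℕ → α, (∀ i < n, step (g i) (g (i+1))) →
      ∀ j, g 0 ∈ A j → g n ∈ A j → g 0 = g n := by
    intro n
    induction n using Nat.strong_induction_on with
    | _ n IH =>
      intro g hg j h0 hn
      by_cases heq : g 0 = g n
      · exact heq
      exfalso
      have hμd : μ ≤ dist (g 0) (g n) := hsep j _ h0 _ hn heq
      have hn1 : 1 ≤ n := by
        rcases Nat.eq_zero_or_pos n with h | h
        · exact absurd (by rw [h]) heq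
        · exact h
      have hd := hdist n g hn1 hg
      have hmn : m + 1 < n := by
        by_contra hcon
        push_neg at hcon
        have hc : (n:ℝ) ≤ (m:ℝ)+1 := by exact_mod_cast hcon
        have : (n:ℝ) * τ ≤ ((m:ℝ)+1) * τ := by nlinarith
        rw [hτμ] at this
        linarith
      -- pigeonhole among the first m+2 vertices
      have hcard : (Finset.univ : Finset (Fin (m+1))).card < (Finset.range (m+2)).card := by
        simp
      obtain ⟨a, ha, b, hb, hne, habcls⟩ :=
        Finset.exists_ne_map_eq_of_card_lt_of_maps_to hcard
          (fun i (_ : i ∈ Finset.range (m+2)) => Finset.mem_univ (cls (g i)))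
      simp only [Finset.mem_range] at ha hb
      obtain ⟨a, b, hab, hbm, hclseq⟩ :
          ∃ a b : ℕ, a < b ∧ b < m + 2 ∧ cls (g a) = cls (g b) := by
        rcases hne.lt_or_gt with h | h
        · exact ⟨a, b, h, hb, habcls⟩
        · exact ⟨b, a, h, ha, habcls.symm⟩
      have hga : g a ∈ P := (hg a (by omega)).1
      have hgb : g b ∈ P := (hg b (by omega)).1
      have hA1 : g a ∈ A (cls (g a)) := hcls _ hga
      have hA2 : g b ∈ A (cls (g a)) := by rw [hclseq]; exact hcls _ hgb
      have hseg : g a = g b := by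
        have hchain : ∀ i < b - a, step ((fun i => g (a+i)) i) ((fun i => g (a+i)) (i+1)) := by
          intro i hi
          simp only
          have he : a + (i+1) = (a + i) + 1 := by omega
          rw [he]
          exact hg (a+i) (by omega)
        have := IH (b-a) (by omega) (fun i => g (a+i)) hchain (cls (g a))
          (by simpa using hA1) (by
            have he : a + (b - a) = b := by omega
            simpa [he] using hA2)
        simpa [Nat.add_sub_cancel' (le_of_lt hab)] using this
      obtain ⟨g', hg', h0', hn'⟩ := hsurg n g a b hab (by omega) hg hseg
      have := IH (n - (b-a)) (by omega) g' hg' j (h0' ▸ h0) (hn' ▸ hn)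
      rw [h0', hn'] at this
      exact heq this
  -- conversion from ChainRel to functional chains
  have hconv : ∀ x y : α, ChainRel P τ x y →
      ∃ (n : ℕ) (g : ℕ → α), (∀ i < n, step (g i) (g (i+1))) ∧ g 0 = x ∧ g n = y := by
    intro x y h
    unfold ChainRel at h
    induction h with
    | refl => exact ⟨0, fun _ => x, fun i hi => absurd hi (by omega), rfl, rfl⟩
    | @tail b c hxb hbc ih =>
      obtain ⟨n, g, hg, h0, hn⟩ := ih
      refine ⟨n+1, fun i => if i ≤ n then g i else c, ?_, ?_, ?_⟩
      · intro i hi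
        rcases Nat.lt_or_ge i n with h | h
        · simp only [if_pos (le_of_lt h), if_pos (by omega : i+1 ≤ n)]
          exact hg i h
        · have hin : i = n := by omega
          subst hin
          simp only [if_pos le_rfl, if_neg (by omega : ¬ i+1 ≤ i), hn]
          exact hbc
      · simp [h0]
      · simp
  -- part (ii) core: with minimality built in via strong induction
  have part2 : ∀ n : ℕ, ∀ g : ℕ → α, (∀ i < n, step (g i) (g (i+1))) → g n ∈ P →
      dist (g 0) (g n) < (m:ℝ) * τ := by
    intro n
    induction n using Nat.strong_induction_on with
    | _ n IH =>
      intro g hg hgn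
      by_cases hnm : n ≤ m
      · rcases Nat.eq_zero_or_pos n with h0 | h0
        · subst h0
          simp only [dist_self]
          have : (0:ℝ) < (m:ℝ) := by exact_mod_cast hm
          positivity
        · have h1 := hdist n g h0 hg
          have h2 : (n:ℝ) ≤ (m:ℝ) := by exact_mod_cast hnm
          nlinarith
      · push_neg at hnm
        have hcard : (Finset.univ : Finset (Fin (m+1))).card < (Finset.range (m+2)).card := by
          simp
        obtain ⟨a, ha, b, hb, hne, habcls⟩ :=
          Finset.exists_ne_map_eq_of_card_lt_of_maps_to hcard
            (fun i (_ : i ∈ Finset.range (m+2)) => Finset.mem_univ (cls (g i)))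
        simp only [Finset.mem_range] at ha hb
        obtain ⟨a, b, hab, hbm, hclseq⟩ :
            ∃ a b : ℕ, a < b ∧ b < m + 2 ∧ cls (g a) = cls (g b) := by
          rcases hne.lt_or_gt with h | h
          · exact ⟨a, b, h, hb, habcls⟩
          · exact ⟨b, a, h, ha, habcls.symm⟩
        have hbn : b ≤ n := by omega
        have hga : g a ∈ P := by
          rcases Nat.lt_or_ge a n with h | h
          · exact (hg a h).1
          · have : a = n := by omega
            rwa [this]
        have hgb : g b ∈ P := by
          rcases Nat.lt_or_ge b n with h | h
          · exact (hg b h).1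
          · have : b = n := by omega
            rwa [this]
        have hA1 : g a ∈ A (cls (g a)) := hcls _ hga
        have hA2 : g b ∈ A (cls (g a)) := by rw [hclseq]; exact hcls _ hgb
        have hseg : g a = g b := by
          have hchain : ∀ i < b - a, step ((fun i => g (a+i)) i) ((fun i => g (a+i)) (i+1)) := by
            intro i hi
            simp only
            have he : a + (i+1) = (a + i) + 1 := by omega
            rw [he]
            exact hg (a+i) (by omega)
          have := key (b-a) (fun i => g (a+i)) hchain (cls (g a))
            (by simpa using hA1) (by
              have he : a + (b - a) = b := by omega
              simpa [he] using hA2)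
          simpa [Nat.add_sub_cancel' (le_of_lt hab)] using this
        obtain ⟨g', hg', h0', hn'⟩ := hsurg n g a b hab hbn hg hseg
        have := IH (n - (b-a)) (by omega) g' hg' (hn' ▸ hgn)
        rwa [h0', hn'] at this
  refine ⟨?_, ?_, ?_⟩
  · -- part (i)
    intro x y hxy j hx hy
    obtain ⟨n, g, hg, h0, hn⟩ := hconv x y hxy
    have := key n g hg j (h0 ▸ hx) (hn ▸ hy)
    rwa [h0, hn] at this
  · -- part (ii)
    intro x hx y hy hxy
    obtain ⟨n, g, hg, h0, hn⟩ := hconv x y hxy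
    have := part2 n g hg (hn ▸ hy)
    rw [h0, hn] at this
    have he : (m:ℝ) * τ = (m:ℝ) / ((m:ℝ)+1) * μ := by rw [hτdef]; ring
    linarith [he ▸ this]
  · -- part (iii)
    intro x hx
    have hsymm : ∀ u v : α, ChainRel P τ u v → ChainRel P τ v u := by
      intro u v h
      unfold ChainRel at h ⊢
      induction h with
      | refl => exact Relation.ReflTransGen.refl
      | @tail b c h1 h2 ih =>
        exact Relation.ReflTransGen.head ⟨h2.2.1, h2.1, by rw [dist_comm]; exact h2.2.2⟩ ih
    have hinj : Set.InjOn cls {y : α | y ∈ P ∧ ChainRel P τ x y} := by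
      intro u hu v hv huv
      have huvchain : ChainRel P τ u v :=
        Relation.ReflTransGen.trans (hsymm x u hu.2) hv.2
      obtain ⟨n, g, hg, h0, hn⟩ := hconv u v huvchain
      have h1 : g 0 ∈ A (cls u) := by rw [h0]; exact hcls u hu.1
      have h2 : g n ∈ A (cls u) := by rw [hn, huv]; exact hcls v hv.1
      have := key n g hg (cls u) h1 h2
      rwa [h0, hn] at this
    have hle := Set.ncard_le_ncard_of_injOn cls
      (fun a _ => Set.mem_univ (cls a)) hinj Set.finite_univ
    simpa [Set.ncard_univ] using hle
end

section
/- Let P be a finite set in a metric space, let μ > 0 and m ≥ 1, and suppose P = A_0 ∪ A_1 ∪ ⋯ ∪ A_m where each A_j is μ-separated. Consider the chain relation ~ on P with threshold τ = μ/(m+1). If a, b are points of the ambient metric space and p, q ∈ P satisfy d(a,p) < μ, d(b,q) < μ, and d(a,b) ≥ ((3m+2)/(m+1)) · μ, then p and q are not ~-related (they lie in distinct clusters). (The key nearest-neighbor claim in Case 1 of the proof of Lemma 4.) -/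
open Finset

variable {α : Type*} [MetricSpace α] [DecidableEq α]

/-!
A chain of `τ`-steps can be shortened to a path with pairwise distinct vertices. Along a path,
two vertices at most `m + 1` steps apart are less than `(m + 1) τ = μ` apart, so by
`μ`-separation they lie in different sets `A_j`; by pigeonhole a path therefore has at most
`m` steps, and `d(p, q) ≤ m τ`. The triangle inequality then gives
`d(a, b) < μ + m τ + μ = (3m + 2) / (m + 1) · μ`.
-/

namespace SimpleGraph

variable {V : Type*}

theorem reachable_fromRel_of_reflTransGen {r : V → V → Prop} {u v : V}
    (h : Relation.ReflTransGen r u v) : (fromRel r).Reachable u v := by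
  induction h with
  | refl => rfl
  | @tail x y _ hxy ih =>
    by_cases hxy' : x = y
    · exact hxy' ▸ ih
    · exact ih.trans (Adj.reachable ((fromRel_adj r x y).2 ⟨hxy', Or.inl hxy⟩))

theorem Walk.mem_of_mem_support {G : SimpleGraph V} {S : Set V} (hS : ∀ x y, G.Adj x y → y ∈ S)
    {u v : V} (w : G.Walk u v) (hu : u ∈ S) {x : V} (hx : x ∈ w.support) : x ∈ S := by
  induction w with
  | nil => simp_all
  | cons h w ih =>
    rcases List.mem_cons.1 hx with rfl | hx
    exacts [hu, ih (hS _ _ h) hx]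

end SimpleGraph

section PseudoMetricSpace

variable {X : Type*} [PseudoMetricSpace X] {G : SimpleGraph X} {τ : ℝ}

theorem dist_le_walk_length_mul (hadj : ∀ x y, G.Adj x y → dist x y < τ) {u v : X}
    (w : G.Walk u v) : dist u v ≤ w.length * τ := by
  induction w with
  | nil => simp
  | cons h w ih =>
    rw [SimpleGraph.Walk.length_cons, Nat.cast_succ, add_mul, one_mul, add_comm]
    exact (dist_triangle _ _ _).trans (add_le_add (hadj _ _ h).le ih)

theorem dist_walk_getVert_lt_mul (hadj : ∀ x y, G.Adj x y → dist x y < τ) {u v : X}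
    (w : G.Walk u v) {i j : ℕ} (hij : i < j) (hj : j ≤ w.length) :
    dist (w.getVert i) (w.getVert j) < (j - i : ℕ) * τ :=
  calc dist (w.getVert i) (w.getVert j)
      ≤ ∑ t ∈ Ico i j, dist (w.getVert t) (w.getVert (t + 1)) := dist_le_Ico_sum_dist _ hij.le
    _ < ∑ t ∈ Ico i j, τ :=
        sum_lt_sum_of_nonempty (nonempty_Ico.2 hij) fun t ht =>
          hadj _ _ (w.adj_getVert_succ (by rw [mem_Ico] at ht; omega))
    _ = (j - i : ℕ) * τ := by simp

end PseudoMetricSpace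

section MetricSpace

variable {X : Type*} [MetricSpace X]

theorem path_length_lt_card_of_separated {G : SimpleGraph X} {τ μ : ℝ} {ι : Type*} [Fintype ι]
    {A : ι → Finset X} (hA : ∀ j, Separated μ (A j)) (hadj : ∀ x y, G.Adj x y → dist x y < τ)
    (hτ : Fintype.card ι * τ ≤ μ) {u v : X} {w : G.Walk u v} (hw : w.IsPath)
    (hcover : ∀ x ∈ w.support, ∃ j, x ∈ A j) : w.length < Fintype.card ι := by
  by_contra! hlen
  choose c hc using fun t : Fin (Fintype.card ι + 1) => hcover _ (w.getVert_mem_support t)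
  obtain ⟨s, t, hst, hcst⟩ := Fintype.exists_ne_map_eq_of_card_lt c (by simp)
  wlog hlt : s < t generalizing s t
  · exact this t s hst.symm hcst.symm (lt_of_le_of_ne (not_lt.1 hlt) hst.symm)
  have hne : w.getVert s ≠ w.getVert t := fun h =>
    hst (Fin.ext (hw.getVert_injOn (by simp; omega) (by simp; omega) h))
  have hμ : μ ≤ dist (w.getVert s) (w.getVert t) := hA (c s) _ (hc s) _ (hcst ▸ hc t) hne
  have hdist := dist_walk_getVert_lt_mul hadj w (Fin.lt_def.1 hlt) (by omega)
  have hτ₀ : 0 ≤ τ := dist_nonneg.trans (hadj _ _ (w.adj_getVert_succ (i := 0) (by omega))).le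
  have hsteps : ((t - s : ℕ) : ℝ) ≤ Fintype.card ι := by exact_mod_cast (by omega)
  nlinarith

def chainGraph (P : Finset X) (τ : ℝ) : SimpleGraph X :=
  SimpleGraph.fromRel fun x y => x ∈ P ∧ y ∈ P ∧ dist x y < τ

variable {P : Finset X} {τ : ℝ} {x y : X}

theorem ChainRel.reachable (h : ChainRel P τ x y) : (chainGraph P τ).Reachable x y :=
  SimpleGraph.reachable_fromRel_of_reflTransGen h

theorem chainGraph_adj_dist_lt (h : (chainGraph P τ).Adj x y) : dist x y < τ := by
  obtain ⟨-, ⟨-, -, hxy⟩ | ⟨-, -, hyx⟩⟩ := h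
  exacts [hxy, dist_comm x y ▸ hyx]

theorem mem_of_chainGraph_adj (h : (chainGraph P τ).Adj x y) : y ∈ P := by
  obtain ⟨-, ⟨-, hy, -⟩ | ⟨hy, -⟩⟩ := h <;> exact hy

end MetricSpace

theorem stmt_8_general (P : Finset α) (m : ℕ) (μ : ℝ)
    (A : Fin (m + 1) → Finset α)
    (hP : P = Finset.univ.biUnion A)
    (hsep : ∀ j, Separated μ (A j))
    (a b p q : α) (hp : p ∈ P)
    (hap : dist a p < μ) (hbq : dist b q < μ)
    (hab : (3 * (m : ℝ) + 2) / ((m : ℝ) + 1) * μ ≤ dist a b) :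
    ¬ ChainRel P (μ / ((m : ℝ) + 1)) p q := by
  intro h
  set τ := μ / ((m : ℝ) + 1)
  have hμ : 0 < μ := dist_nonneg.trans_lt hap
  obtain ⟨w, hw⟩ := h.reachable.exists_isPath
  have hcover : ∀ x ∈ w.support, ∃ j, x ∈ A j := fun x hx => by
    simpa [hP] using w.mem_of_mem_support (fun _ _ => mem_of_chainGraph_adj) hp hx
  have hτ : (Fintype.card (Fin (m + 1)) : ℝ) * τ ≤ μ := by
    rw [Fintype.card_fin, Nat.cast_succ, mul_div_cancel₀ μ (by positivity)]
  have hlen : w.length < m + 1 := by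
    simpa using path_length_lt_card_of_separated hsep (fun _ _ => chainGraph_adj_dist_lt) hτ hw hcover
  have hpq : dist p q ≤ m * τ :=
    (dist_le_walk_length_mul (fun _ _ => chainGraph_adj_dist_lt) w).trans
      (by gcongr; exact_mod_cast Nat.lt_succ_iff.1 hlen)
  have hab' : (3 * (m : ℝ) + 2) / ((m : ℝ) + 1) * μ = μ + m * τ + μ := by
    simp only [τ]; field_simp; ring
  linarith [dist_triangle4 a p q b, dist_comm b q]

/-- The key nearest-neighbor claim in Case 1 of the proof of Lemma 4: points of `P`
lying within distance `< μ` of two far-apart points are in distinct clusters. -/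
theorem stmt_8 (P : Finset α) (m : ℕ) (hm : 1 ≤ m) (μ : ℝ) (hμ : 0 < μ)
    (A : Fin (m + 1) → Finset α)
    (hP : P = Finset.univ.biUnion A)
    (hsep : ∀ j, Separated μ (A j))
    (a b p q : α) (hp : p ∈ P) (hq : q ∈ P)
    (hap : dist a p < μ) (hbq : dist b q < μ)
    (hab : (3 * (m : ℝ) + 2) / ((m : ℝ) + 1) * μ ≤ dist a b) :
    ¬ ChainRel P (μ / ((m : ℝ) + 1)) p q :=
  stmt_8_general P m μ A hP hsep a b p q hp hap hbq hab
end
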